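/- Let A be a graded-commutative dga over ℚ, let n ≥ 3, let a, b ∈ A¹ be cocycles, and let T₂, …, T_{n−1} ∈ A¹ satisfy d(T₂) = a·b and d(T_j) = a·T_{j−1} for 3 ≤ j ≤ n−1. Define a family a_{i,j} for 1 ≤ i ≤ j ≤ n with (i,j) ≠ (1,n) by: a_{i,i} = a for i < n; a_{n,n} = b; a_{i,j} = 0 for i < j < n; and a_{i,n} = T_{n−i+1} for 2 ≤ i ≤ n−1. Then this family is a defining system for the n-fold Massey product ⟨[a],[a],…,[a],[b]⟩ (with n−1 copies of [a]), and its associated representative Σ_{i=1}^{n−1} ā_{1,i} a_{i+1,n} equals a·T_{n−1}, which is a cocycle. In particular, if there exists T_n ∈ A¹ with d(T_n) = a·T_{n−1}, then this Massey product contains zero. (This is the formal pattern satisfied by the Bloch–Totaro cycles ρ_n(a), which obey d(ρ_n(a)) = ρ_{n−1}(a)·a.) -/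

import Mathlib

/-- The defining system for the `n`-fold Massey product `⟨[a],…,[a],[b]⟩` built from the
Bloch–Totaro cochains: `a_{i,i} = a` for `i < n`, `a_{n,n} = b`, `a_{i,j} = 0` for
`i < j < n`, and `a_{i,n} = T_{n-i+1}` for `2 ≤ i ≤ n-1`. -/
def blochTotaroFamily {A : Type*} [Ring A] (n : ℕ) (a b : A) (T : ℕ → A) : ℕ → ℕ → A :=
  fun i j =>
    if i = j then (if j = n then b else a)
    else if j = n then T (n - i + 1) else 0

/-!
Since `a` has odd degree, graded commutativity over `ℚ` forces `a * a = 0`. The differential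
of every off-diagonal entry is then `a` times the entry just below it: for the last column this
is the recursion `d T_j = a T_{j-1}`, and elsewhere both sides vanish. For the same reason the
sums in the defining-system equations and in the representative collapse to their first term,
and `d (a T_{n-1}) = -a · d T_{n-1} = -(a · a) · a_{3,n} = 0`.
-/

section Family

variable {A : Type*} [Ring A] {n : ℕ} {a b : A} {T : ℕ → A}

theorem blochTotaroFamily_self_of_ne {i : ℕ} (hi : i ≠ n) : blochTotaroFamily n a b T i i = a := by
  simp [blochTotaroFamily, hi]

theorem blochTotaroFamily_self_last : blochTotaroFamily n a b T n n = b := by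
  simp [blochTotaroFamily]

theorem blochTotaroFamily_eq_zero_of_ne {i j : ℕ} (hij : i ≠ j) (hj : j ≠ n) :
    blochTotaroFamily n a b T i j = 0 := by
  simp [blochTotaroFamily, hij, hj]

theorem blochTotaroFamily_last_of_ne {i : ℕ} (hi : i ≠ n) :
    blochTotaroFamily n a b T i n = T (n - i + 1) := by
  simp [blochTotaroFamily, hi]

theorem blochTotaroFamily_mem {S : Type*} [SetLike S A] [ZeroMemClass S A] {M : S}
    (ha : a ∈ M) (hb : b ∈ M) (hT : ∀ j, 2 ≤ j → j ≤ n - 1 → T j ∈ M)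
    {i j : ℕ} (hi : 1 ≤ i) (hij : i ≤ j) (hjn : j ≤ n) (hne : (i, j) ≠ (1, n)) :
    blochTotaroFamily n a b T i j ∈ M := by
  rcases eq_or_ne i j with rfl | hij'
  · rcases eq_or_ne i n with rfl | hin
    · rwa [blochTotaroFamily_self_last]
    · rwa [blochTotaroFamily_self_of_ne hin]
  · rcases eq_or_ne j n with rfl | hjn'
    · have hi1 : i ≠ 1 := by rintro rfl; exact hne rfl
      rw [blochTotaroFamily_last_of_ne hij']
      exact hT _ (by omega) (by omega)
    · rw [blochTotaroFamily_eq_zero_of_ne hij' hjn']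
      exact zero_mem M

theorem sum_blochTotaroFamily_mul {i j : ℕ} (hij : i < j) (hjn : j ≤ n) :
    ∑ l ∈ Finset.Ico i j, blochTotaroFamily n a b T i l * blochTotaroFamily n a b T (l + 1) j =
      a * blochTotaroFamily n a b T (i + 1) j := by
  rw [Finset.sum_eq_single_of_mem i (Finset.mem_Ico.mpr ⟨le_rfl, hij⟩),
    blochTotaroFamily_self_of_ne (by omega)]
  intro l hl hli
  have hl := Finset.mem_Ico.mp hl
  rw [blochTotaroFamily_eq_zero_of_ne (Ne.symm hli) (by omega), zero_mul]

theorem map_blochTotaroFamily {F : Type*} [FunLike F A A] [ZeroHomClass F A A] {d : F}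
    (haa : a * a = 0) (hT2 : d (T 2) = a * b)
    (hTj : ∀ j, 3 ≤ j → j ≤ n - 1 → d (T j) = a * T (j - 1))
    {i j : ℕ} (hi : 1 ≤ i) (hij : i < j) (hjn : j ≤ n) (hne : (i, j) ≠ (1, n)) :
    d (blochTotaroFamily n a b T i j) = a * blochTotaroFamily n a b T (i + 1) j := by
  rcases eq_or_ne j n with rfl | hjn'
  · have hi1 : i ≠ 1 := by rintro rfl; exact hne rfl
    rw [blochTotaroFamily_last_of_ne hij.ne]
    rcases eq_or_ne (i + 1) j with hlast | hlast
    · rw [show j - i + 1 = 2 by omega, hT2, hlast, blochTotaroFamily_self_last]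
    · rw [blochTotaroFamily_last_of_ne hlast, hTj _ (by omega) (by omega),
        show j - i + 1 - 1 = j - (i + 1) + 1 by omega]
  · rw [blochTotaroFamily_eq_zero_of_ne hij.ne hjn', map_zero]
    rcases eq_or_ne (i + 1) j with rfl | hsucc
    · rw [blochTotaroFamily_self_of_ne hjn', haa]
    · rw [blochTotaroFamily_eq_zero_of_ne hsucc hjn', mul_zero]

end Family

theorem mul_self_eq_zero_of_odd {A : Type*} [Ring A] [IsAddTorsionFree A]
    {S : Type*} [SetLike S A] {deg : ℤ → S}
    (hcomm : ∀ (p q : ℤ) (x y : A), x ∈ deg p → y ∈ deg q →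
      x * y = (Int.negOnePow (p * q) : ℤ) • (y * x))
    {p : ℤ} (hp : Odd p) {x : A} (hx : x ∈ deg p) : x * x = 0 := by
  have h := hcomm p p x x hx hx
  rw [Int.negOnePow_odd _ (hp.mul hp), Units.val_neg, Units.val_one, neg_one_smul] at h
  exact self_eq_neg.mp h

theorem map_mul_eq_zero_of_map_eq_mul {A : Type*} [Ring A] {S : Type*} [SetLike S A]
    {deg : ℤ → S} {F : Type*} [FunLike F A A] {d : F}
    (hleibniz : ∀ (p : ℤ) (x y : A), x ∈ deg p →
      d (x * y) = d x * y + (Int.negOnePow p : ℤ) • (x * d y))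
    {p : ℤ} {x y z : A} (hx : x ∈ deg p) (hdx : d x = 0) (hxx : x * x = 0) (hdy : d y = x * z) :
    d (x * y) = 0 := by
  rw [hleibniz p x y hx, hdx, hdy, ← mul_assoc, hxx]
  simp

theorem massey_power_bloch_totaro_general
    (A : Type*) [Ring A] [Algebra ℚ A]
    (deg : ℤ → Submodule ℚ A)
    (d : A →ₗ[ℚ] A)
    (hleibniz : ∀ (p : ℤ) (x y : A), x ∈ deg p →
      d (x * y) = d x * y + (Int.negOnePow p : ℤ) • (x * d y))
    (hcomm : ∀ (p q : ℤ) (x y : A), x ∈ deg p → y ∈ deg q →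
      x * y = (Int.negOnePow (p * q) : ℤ) • (y * x))
    (n : ℕ) (hn : 3 ≤ n)
    (a b : A) (ha : a ∈ deg 1) (hb : b ∈ deg 1) (hca : d a = 0)
    (T : ℕ → A)
    (hTmem : ∀ j, 2 ≤ j → j ≤ n - 1 → T j ∈ deg 1)
    (hT2 : d (T 2) = a * b)
    (hTj : ∀ j, 3 ≤ j → j ≤ n - 1 → d (T j) = a * T (j - 1)) :
    -- all members of the family lie in A¹
    (∀ i j, 1 ≤ i → i ≤ j → j ≤ n → (i, j) ≠ (1, n) →
      blochTotaroFamily n a b T i j ∈ deg 1) ∧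
    -- it is a defining system (bars are trivial in degree 1)
    (∀ i j, 1 ≤ i → i < j → j ≤ n → (i, j) ≠ (1, n) →
      d (blochTotaroFamily n a b T i j) =
        ∑ l ∈ Finset.Ico i j,
          blochTotaroFamily n a b T i l * blochTotaroFamily n a b T (l + 1) j) ∧
    -- the associated representative equals a·T_{n-1}
    (∑ i ∈ Finset.Ico 1 n,
        blochTotaroFamily n a b T 1 i * blochTotaroFamily n a b T (i + 1) n) =
      a * T (n - 1) ∧
    -- which is a cocycle
    d (a * T (n - 1)) = 0 ∧
    -- and bounded whenever a·T_{n-1} bounds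
    (∀ Tn : A, Tn ∈ deg 1 → d Tn = a * T (n - 1) →
      (∑ i ∈ Finset.Ico 1 n,
          blochTotaroFamily n a b T 1 i * blochTotaroFamily n a b T (i + 1) n) = d Tn) := by
  have : IsAddTorsionFree A := .of_module_rat A
  have haa : a * a = 0 := mul_self_eq_zero_of_odd hcomm odd_one ha
  have hTlast : blochTotaroFamily n a b T 2 n = T (n - 1) := by
    rw [blochTotaroFamily_last_of_ne (by omega), show n - 2 + 1 = n - 1 by omega]
  have hrep : ∑ i ∈ Finset.Ico 1 n,
      blochTotaroFamily n a b T 1 i * blochTotaroFamily n a b T (i + 1) n = a * T (n - 1) := by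
    rw [sum_blochTotaroFamily_mul (by omega) le_rfl, hTlast]
  have hcocycle : d (a * T (n - 1)) = 0 := by
    refine map_mul_eq_zero_of_map_eq_mul (z := blochTotaroFamily n a b T 3 n)
      hleibniz ha hca haa ?_
    rw [← hTlast]
    exact map_blochTotaroFamily haa hT2 hTj (by omega) (by omega) le_rfl (by simp)
  refine ⟨fun i j hi hij hjn hne => blochTotaroFamily_mem ha hb hTmem hi hij hjn hne,
    fun i j hi hij hjn hne => ?_, hrep, hcocycle, fun Tn _ hTn => hrep.trans hTn.symm⟩
  rw [map_blochTotaroFamily haa hT2 hTj hi hij hjn hne, sum_blochTotaroFamily_mul hij hjn]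

/-- Let `A` be a graded-commutative dga over `ℚ`, `n ≥ 3`, `a, b ∈ A¹`
cocycles, and `T₂, …, T_{n-1} ∈ A¹` with `d T₂ = a·b` and `d T_j = a·T_{j-1}` for
`3 ≤ j ≤ n-1`.  Then the family `a_{i,i} = a` (`i < n`), `a_{n,n} = b`, `a_{i,j} = 0`
(`i < j < n`), `a_{i,n} = T_{n-i+1}` (`2 ≤ i ≤ n-1`) is a defining system for the `n`-fold
Massey product `⟨[a],…,[a],[b]⟩` (all its members lie in `A¹`, and since all of them have
degree `1` the bars are trivial), its associated representative
`Σ_{i=1}^{n-1} ā_{1,i} a_{i+1,n}` equals `a·T_{n-1}`, which is a cocycle; and if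
`T_n ∈ A¹` satisfies `d T_n = a·T_{n-1}` then this representative is the coboundary
`d T_n`, so the Massey product contains zero. -/
theorem massey_power_bloch_totaro
    (A : Type*) [Ring A] [Algebra ℚ A]
    (deg : ℤ → Submodule ℚ A) [GradedAlgebra deg]
    (d : A →ₗ[ℚ] A)
    (hd_mem : ∀ (p : ℤ) (x : A), x ∈ deg p → d x ∈ deg (p + 1))
    (hd_sq : ∀ x : A, d (d x) = 0)
    (hleibniz : ∀ (p : ℤ) (x y : A), x ∈ deg p →
      d (x * y) = d x * y + (Int.negOnePow p : ℤ) • (x * d y))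
    (hcomm : ∀ (p q : ℤ) (x y : A), x ∈ deg p → y ∈ deg q →
      x * y = (Int.negOnePow (p * q) : ℤ) • (y * x))
    (n : ℕ) (hn : 3 ≤ n)
    (a b : A) (ha : a ∈ deg 1) (hb : b ∈ deg 1) (hca : d a = 0) (hcb : d b = 0)
    (T : ℕ → A)
    (hTmem : ∀ j, 2 ≤ j → j ≤ n - 1 → T j ∈ deg 1)
    (hT2 : d (T 2) = a * b)
    (hTj : ∀ j, 3 ≤ j → j ≤ n - 1 → d (T j) = a * T (j - 1)) :
    -- all members of the family lie in A¹
    (∀ i j, 1 ≤ i → i ≤ j → j ≤ n → (i, j) ≠ (1, n) →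
      blochTotaroFamily n a b T i j ∈ deg 1) ∧
    -- it is a defining system (bars are trivial in degree 1)
    (∀ i j, 1 ≤ i → i < j → j ≤ n → (i, j) ≠ (1, n) →
      d (blochTotaroFamily n a b T i j) =
        ∑ l ∈ Finset.Ico i j,
          blochTotaroFamily n a b T i l * blochTotaroFamily n a b T (l + 1) j) ∧
    -- the associated representative equals a·T_{n-1}
    (∑ i ∈ Finset.Ico 1 n,
        blochTotaroFamily n a b T 1 i * blochTotaroFamily n a b T (i + 1) n) =
      a * T (n - 1) ∧
    -- which is a cocycle
    d (a * T (n - 1)) = 0 ∧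
    -- and bounded whenever a·T_{n-1} bounds
    (∀ Tn : A, Tn ∈ deg 1 → d Tn = a * T (n - 1) →
      (∑ i ∈ Finset.Ico 1 n,
          blochTotaroFamily n a b T 1 i * blochTotaroFamily n a b T (i + 1) n) = d Tn) :=
  massey_power_bloch_totaro_general A deg d hleibniz hcomm n hn a b ha hb hca T hTmem hT2 hTj
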